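/- There exists a subshift Σ such that h_𝒞(Σ̄) < h_𝒞(Σ) = h_top(Σ), and such that moreover h*_𝒞(Σ̄) < h*_𝒞(Σ) = h_top(Σ). In particular, the left constraint entropies of a subshift and of its time reversal can differ, and a subshift of quasi-finite type can satisfy h_𝒞(Σ) = h_top(Σ). -/

import Mathlib

open Filter Set MeasureTheory

namespace QFTPaper

variable {A : Type*} {B : Type*}

/-- The left shift on bi-infinite sequences over the alphabet `A`. -/
def shift (x : ℤ → A) : ℤ → A := fun n => x (n + 1)

/-- A subshift: a closed, shift-invariant subset of `A^ℤ`. -/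
def IsSubshift [TopologicalSpace A] (X : Set (ℤ → A)) : Prop :=
  IsClosed X ∧ shift '' X = X

/-- The finite word `w` occurs in `x` at position `k`. -/
def OccursAt (w : List A) (x : ℤ → A) (k : ℤ) : Prop :=
  ∀ i : Fin w.length, x (k + (i : ℕ)) = w.get i

/-- The language of `X`: words of length `n` occurring in elements of `X`
(at position `0`, which is no restriction by shift-invariance). -/
def Lang (X : Set (ℤ → A)) (n : ℕ) : Set (List A) :=
  { w | w.length = n ∧ ∃ x ∈ X, OccursAt w x 0 }

/-- Topological entropy of a subshift. -/
noncomputable def hTop (X : Set (ℤ → A)) : ℝ :=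
  limsup (fun n : ℕ => Real.log (Nat.card ↥(Lang X n)) / (n : ℝ)) atTop

/-- Follower set of the finite word `w = A₋ₙ…A₀` (listed from `A₋ₙ` to `A₀`):
the set of one-sided sequences `B₀B₁B₂…` with `B ∈ X` and `B₋ₙ…B₀ = A₋ₙ…A₀`,
realized by requiring `w` to occur in `B` at positions `0,…,n` and reading off
the tail of `B` starting at the position of the last letter of `w`.
For the empty word this gives `X₊` (by shift-invariance). -/
def fol (X : Set (ℤ → A)) (w : List A) : Set (ℕ → A) :=
  { y | ∃ B ∈ X, (∀ i : Fin w.length, B ((i : ℕ) : ℤ) = w.get i) ∧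
        ∀ k : ℕ, y k = B ((w.length : ℤ) - 1 + (k : ℤ)) }

/-- `w = A₋ₙ…A₀` is a left constraint:
`∅ ≠ fol(A₋ₙ…A₀) ⊊ fol(A₋ₙ₊₁…A₀)`. -/
def IsLeftConstraint (X : Set (ℤ → A)) (w : List A) : Prop :=
  w ≠ [] ∧ fol X w ≠ ∅ ∧ fol X w ⊂ fol X w.tail

/-- `𝒞(X, n)`: the set of left constraints of length `n`. -/
def LC (X : Set (ℤ → A)) (n : ℕ) : Set (List A) :=
  { w | w.length = n ∧ IsLeftConstraint X w }

/-- The left constraint entropy `h_𝒞(X) = limsup (1/n) log⁺ #𝒞(X,n)`. -/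
noncomputable def hC (X : Set (ℤ → A)) : ℝ :=
  limsup (fun n : ℕ => max 0 (Real.log (Nat.card ↥(LC X n))) / (n : ℝ)) atTop

/-- The time-reversed subshift `X̄`. -/
def rev (X : Set (ℤ → A)) : Set (ℤ → A) :=
  (fun x : ℤ → A => fun n : ℤ => x (-n)) '' X

/-- The symmetric constraint entropy `h_𝒮𝒞(X) = min (h_𝒞(X), h_𝒞(X̄))`. -/
noncomputable def hSC (X : Set (ℤ → A)) : ℝ := min (hC X) (hC (rev X))

/-- Subshift of quasi-finite type: `h_𝒮𝒞(X) < h_top(X)`. -/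
def IsQFT [TopologicalSpace A] (X : Set (ℤ → A)) : Prop :=
  IsSubshift X ∧ hSC X < hTop X

/-- The word `B₋ₘ…B₀` read off from a one-sided past `b` (where `b j = B₋ⱼ`). -/
def wordOf (b : ℕ → A) (m : ℕ) : List A :=
  (List.range (m + 1)).map fun j => b (m - j)

/-- An extendable left constraint: a left constraint `A₋ₙ…A₀` which admits a
one-sided past `B` extending it such that `B₋ₘ…B₀` is again a left constraint
for infinitely many `m`. -/
def IsExtendable (X : Set (ℤ → A)) (w : List A) : Prop :=
  IsLeftConstraint X w ∧
  ∃ b : ℕ → A, wordOf b (w.length - 1) = w ∧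
    ∀ N : ℕ, ∃ m, N ≤ m ∧ IsLeftConstraint X (wordOf b m)

/-- `𝒞*(X, n)`: the set of extendable left constraints of length `n`. -/
def ELC (X : Set (ℤ → A)) (n : ℕ) : Set (List A) :=
  { w | w.length = n ∧ IsExtendable X w }

/-- The extendable left constraint entropy `h*_𝒞(X)`. -/
noncomputable def hCstar (X : Set (ℤ → A)) : ℝ :=
  limsup (fun n : ℕ => Real.log (Nat.card ↥(ELC X n)) / (n : ℝ)) atTop

/-- `h*_𝒮𝒞(X) = min (h*_𝒞(X), h*_𝒞(X̄))`. -/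
noncomputable def hSCstar (X : Set (ℤ → A)) : ℝ := min (hCstar X) (hCstar (rev X))

/-- Subshift of weak quasi-finite type: `h*_𝒮𝒞(X) < h_top(X)`. -/
def IsWeakQFT [TopologicalSpace A] (X : Set (ℤ → A)) : Prop :=
  IsSubshift X ∧ hSCstar X < hTop X

/-- Subshift of finite type: defined by excluding a finite set of finite words. -/
def IsSFT (X : Set (ℤ → A)) : Prop :=
  ∃ F : Finset (List A), X = { x | ∀ w ∈ F, ∀ k : ℤ, ¬ OccursAt w x k }

/-- Sofic subshift: the image of an SFT under a continuous shift-commuting map. -/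
def IsSofic [TopologicalSpace A] (X : Set (ℤ → A)) : Prop :=
  ∃ (B : Type) (_ : Fintype B) (Y : Set (ℤ → B)) (π : (ℤ → B) → (ℤ → A)),
    IsSFT Y ∧
    (letI : TopologicalSpace B := ⊥
     Continuous π) ∧
    (∀ x : ℤ → B, π (shift x) = shift (π x)) ∧ π '' Y = X


/-- Topological conjugacy of subshifts: a homeomorphism commuting with the shifts. -/
def Conjugate [TopologicalSpace A] [TopologicalSpace B]
    (X : Set (ℤ → A)) (Y : Set (ℤ → B)) : Prop :=
  ∃ φ : X ≃ₜ Y, ∀ x x' : X, (x' : ℤ → A) = shift (x : ℤ → A) →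
    (φ x' : ℤ → B) = shift (φ x : ℤ → B)

/-- The cylinder of a word of length `n` placed at positions `0,…,n-1`. -/
def cylSet (n : ℕ) (w : Fin n → A) : Set (ℤ → A) :=
  { x | ∀ i : Fin n, x ((i : ℕ) : ℤ) = w i }

/-- Entropy of the partition of `A^ℤ` into cylinders of length `n`. -/
noncomputable def blockEntropy [Fintype A] [MeasurableSpace A]
    (μ : Measure (ℤ → A)) (n : ℕ) : ℝ :=
  ∑ w : Fin n → A, Real.negMulLog ((μ (cylSet n w)).toReal)

/-- Kolmogorov–Sinai entropy of a shift-invariant measure on `A^ℤ`,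
computed with the natural (generating) partition into cylinders. -/
noncomputable def KSEntropy [Fintype A] [MeasurableSpace A]
    (μ : Measure (ℤ → A)) : ℝ :=
  ⨅ n : ℕ, blockEntropy μ (n + 1) / (n + 1)

/-- A maximum measure: an ergodic shift-invariant Borel probability measure
carried by `X` whose Kolmogorov–Sinai entropy equals the topological entropy of `X`. -/
def IsMaxMeasure [Fintype A] [MeasurableSpace A]
    (X : Set (ℤ → A)) (μ : Measure (ℤ → A)) : Prop :=
  IsProbabilityMeasure μ ∧ μ Xᶜ = 0 ∧ Ergodic shift μ ∧ KSEntropy μ = hTop X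

/-- The number of points of `X` fixed by the `n`-th power of the shift. -/
noncomputable def perCount (X : Set (ℤ → A)) (n : ℕ) : ℕ :=
  Nat.card {x : ℤ → A | x ∈ X ∧ shift^[n] x = x}

/-!
Let `X` (`echoShift`) consist of the sequences over `{0, 1, 2, •}` with at most one marker `•`, to
the right of which the left half is reflected with `2` collapsed to `1`. Every marker-free word `w`
is a left constraint of `X`: the sequence realizing `w.tail` with its marker right after it
reflects the letter `c` placed in front of `w.tail`, and for `c` with a collapse different from
that of `w[0]` this is a follower of `w.tail` but not of `w`. As words of `X` carry at most one
marker, `h_𝒞(X) = h*_𝒞(X) = h_top(X) = log 3`.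

In the reversal `X̄` the marker reflects the right half, collapsed, to its left, so a `2` never
stands left of a marker. Comparing the followers of a word with those of its tail shows that after
its first letter a left constraint of `X̄` contains a `2` only as the mirror image of a `1` across
its marker. So it is determined by its first letter, the position of its marker and the positions
of its `1`s: there are at most `5 (n + 1) 2ⁿ` of length `n`, and `h*_𝒞(X̄) ≤ h_𝒞(X̄) ≤ log 2`.
-/

open Topology

section General

variable {A : Type*}

lemma shift_image_eq_self {X : Set (ℤ → A)}
    (hX : ∀ c : ℤ, ∀ x ∈ X, (fun n => x (n + c)) ∈ X) : shift '' X = X := by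
  refine Subset.antisymm (image_subset_iff.2 fun x hx => hX 1 x hx) fun x hx => ?_
  refine ⟨fun n => x (n + -1), hX (-1) x hx, funext fun n => ?_⟩
  simp [shift]

lemma mem_rev_iff {X : Set (ℤ → A)} {x : ℤ → A} : x ∈ rev X ↔ (fun n => x (-n)) ∈ X := by
  constructor
  · rintro ⟨x, hx, rfl⟩
    simpa using hx
  · exact fun hx => ⟨_, hx, funext fun n => by simp⟩

lemma mem_fol_iff {X : Set (ℤ → A)} {w : List A} {y : ℕ → A} :
    y ∈ fol X w ↔ ∃ x ∈ X, (∀ i (hi : i < w.length), x i = w[i]) ∧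
      ∀ k : ℕ, y k = x (w.length - 1 + k) := by
  simp [fol, Fin.forall_iff]

lemma mem_Lang_iff {X : Set (ℤ → A)} {w : List A} {n : ℕ} :
    w ∈ Lang X n ↔ w.length = n ∧ ∃ x ∈ X, ∀ i (hi : i < w.length), x i = w[i] := by
  simp [Lang, OccursAt, Fin.forall_iff]

lemma fol_apply_zero {X : Set (ℤ → A)} {w : List A} {y : ℕ → A} (hy : y ∈ fol X w)
    (hw : w ≠ []) : y 0 = w.getLast hw := by
  obtain ⟨x, -, hxw, hxy⟩ := mem_fol_iff.1 hy
  have hn : 0 < w.length := List.length_pos_iff.2 hw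
  rw [hxy 0, List.getLast_eq_getElem, ← hxw _ (by omega)]
  congr 1
  omega

lemma fol_subset_fol_tail {X : Set (ℤ → A)} (hX : shift '' X = X) (w : List A) :
    fol X w ⊆ fol X w.tail := by
  rcases w with _ | ⟨a, v⟩
  · exact subset_rfl
  intro y hy
  obtain ⟨x, hx, hxw, hxy⟩ := mem_fol_iff.1 hy
  refine mem_fol_iff.2 ⟨shift x, hX ▸ mem_image_of_mem shift hx, fun i hi => ?_, fun k => ?_⟩
  · have := hxw (i + 1) (by simp at hi ⊢; omega)
    simpa [shift] using this
  · rw [hxy k, shift]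
    congr 1
    simp only [List.length_cons, List.tail_cons, Nat.cast_add, Nat.cast_one]
    ring

lemma not_isLeftConstraint_of_fol_tail_subset {X : Set (ℤ → A)} {w : List A}
    (h : fol X w.tail ⊆ fol X w) : ¬ IsLeftConstraint X w :=
  fun hw => hw.2.2.2 h

lemma IsLeftConstraint.mem_Lang {X : Set (ℤ → A)} {w : List A} (hw : IsLeftConstraint X w) :
    w ∈ Lang X w.length := by
  obtain ⟨y, hy⟩ := nonempty_iff_ne_empty.2 hw.2.1
  obtain ⟨x, hx, hxw, -⟩ := mem_fol_iff.1 hy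
  exact mem_Lang_iff.2 ⟨rfl, x, hx, hxw⟩

lemma LC_subset_Lang (X : Set (ℤ → A)) (n : ℕ) : LC X n ⊆ Lang X n :=
  fun _ hw => hw.1 ▸ hw.2.mem_Lang

lemma ELC_subset_LC (X : Set (ℤ → A)) (n : ℕ) : ELC X n ⊆ LC X n :=
  fun _ hw => ⟨hw.1, hw.2.1⟩

lemma finite_Lang [Finite A] (X : Set (ℤ → A)) (n : ℕ) : (Lang X n).Finite :=
  (List.finite_length_eq A n).subset fun _ hw => hw.1

lemma card_LC_le_card_Lang [Finite A] (X : Set (ℤ → A)) (n : ℕ) :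
    Nat.card (LC X n) ≤ Nat.card (Lang X n) :=
  Nat.card_mono (finite_Lang X n) (LC_subset_Lang X n)

lemma card_ELC_le_card_LC [Finite A] (X : Set (ℤ → A)) (n : ℕ) :
    Nat.card (ELC X n) ≤ Nat.card (LC X n) :=
  Nat.card_mono ((finite_Lang X n).subset (LC_subset_Lang X n)) (ELC_subset_LC X n)

def pad (w : List A) (c : A) : ℤ → A := fun i => if 0 ≤ i then w.getD i.toNat c else c

lemma pad_natCast {w : List A} {c : A} {i : ℕ} (hi : i < w.length) : pad w c i = w[i] := by
  simp [pad, hi]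

lemma pad_of_neg {w : List A} {c : A} {i : ℤ} (hi : i < 0) : pad w c i = c := by
  simp [pad, not_le.2 hi]

lemma pad_ne {w : List A} {a c : A} (hw : a ∉ w) (hc : c ≠ a) (i : ℤ) : pad w c i ≠ a := by
  unfold pad
  split_ifs
  · rw [List.getD_eq_getElem?_getD]
    cases h : w[i.toNat]? with
    | none => exact hc
    | some b => exact fun hb => hw (hb ▸ List.mem_of_getElem? h)
  · exact hc

-- As in `fol`, `y 0` sits at the last letter of `w` (which takes precedence).
def splice (w : List A) (c : A) (y : ℕ → A) : ℤ → A := fun i =>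
  if i < w.length then pad w c i else y (i - (w.length - 1)).toNat

lemma splice_natCast {w : List A} {c : A} {y : ℕ → A} {i : ℕ} (hi : i < w.length) :
    splice w c y i = w[i] := by
  simp [splice, hi, pad_natCast hi]

lemma splice_read {w : List A} {c : A} {y : ℕ → A} (hw : w ≠ []) (hy : y 0 = w.getLast hw)
    (k : ℕ) : splice w c y (w.length - 1 + k) = y k := by
  have hn : 0 < w.length := List.length_pos_iff.2 hw
  rcases k.eq_zero_or_pos with rfl | hk
  · rw [Nat.cast_zero, add_zero, hy, List.getLast_eq_getElem, ← splice_natCast (c := c) (y := y)]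
    congr 1
    omega
  · simp only [splice]
    rw [if_neg (by omega)]
    congr 1
    omega

lemma splice_cases (w : List A) (c : A) (y : ℕ → A) (i : ℤ) :
    (∃ (j : ℕ) (hj : j < w.length), (j : ℤ) = i ∧ splice w c y i = w[j]) ∨
      splice w c y i = c ∨ ∃ d, splice w c y i = y d := by
  by_cases h : i < w.length
  · by_cases h0 : 0 ≤ i
    · exact .inl ⟨i.toNat, by omega, by omega, by
        rw [← splice_natCast (c := c) (y := y) (by omega), Int.toNat_of_nonneg h0]⟩
    · exact .inr (.inl (by simp [splice, h, pad_of_neg (not_le.1 h0)]))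
  · exact .inr (.inr ⟨_, if_neg h⟩)

lemma splice_ne {w : List A} {a c : A} {y : ℕ → A} (hw : a ∉ w) (hc : c ≠ a) (hy : ∀ d, y d ≠ a)
    (i : ℤ) : splice w c y i ≠ a := by
  rcases splice_cases w c y i with ⟨j, hj, -, h⟩ | h | ⟨d, h⟩ <;> rw [h]
  exacts [fun h => hw (h ▸ List.getElem_mem hj), hc, hy d]

end General

section Entropy

open Real

lemma tendsto_log_mul_pow_div {C b : ℝ} (hC : 0 < C) (hb : 0 < b) :
    Tendsto (fun n : ℕ => log (C * (n + 1) * b ^ n) / n) atTop (𝓝 (log b)) := by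
  have hlog : Tendsto (fun n : ℕ => log ((n : ℝ) + 1) / n) atTop (𝓝 0) := by
    have := (tendsto_pow_log_div_mul_add_atTop 1 (-1) 1 one_ne_zero).comp
      (tendsto_atTop_add_const_right atTop 1 tendsto_natCast_atTop_atTop)
    refine this.congr fun n => ?_
    simp
  have hsum := ((tendsto_const_div_atTop_nhds_zero_nat (log C)).add hlog).add_const (log b)
  rw [zero_add, zero_add] at hsum
  refine hsum.congr' ((eventually_ge_atTop 1).mono fun n hn => ?_)
  have hn : (n : ℝ) ≠ 0 := by positivity
  dsimp only
  rw [log_mul (by positivity) (by positivity), log_mul (by positivity) (by positivity), log_pow]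
  field_simp

lemma log_div_le_log_mul_pow_div {u : ℕ → ℕ} {C b : ℝ} (hC : 1 ≤ C) (hb : 1 ≤ b)
    (hu : ∀ n, (u n : ℝ) ≤ C * (n + 1) * b ^ n) (n : ℕ) :
    log (u n) / n ≤ log (C * (n + 1) * b ^ n) / n := by
  rcases (u n).eq_zero_or_pos with h | h
  · rw [h, Nat.cast_zero, log_zero, zero_div]
    refine div_nonneg (log_nonneg ?_) n.cast_nonneg
    exact one_le_mul_of_one_le_of_one_le
      (one_le_mul_of_one_le_of_one_le hC (by linarith [n.cast_nonneg (α := ℝ)])) (one_le_pow₀ hb)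
  · exact div_le_div_of_nonneg_right (log_le_log (by exact_mod_cast h) (hu n)) n.cast_nonneg

lemma limsup_log_div_le {u : ℕ → ℕ} {C b : ℝ} (hC : 1 ≤ C) (hb : 1 ≤ b)
    (hu : ∀ n, (u n : ℝ) ≤ C * (n + 1) * b ^ n) :
    limsup (fun n : ℕ => log (u n) / n) atTop ≤ log b := by
  have hg := tendsto_log_mul_pow_div (C := C) (b := b) (by linarith) (by linarith)
  calc limsup (fun n : ℕ => log (u n) / n) atTop
      ≤ limsup (fun n : ℕ => log (C * (n + 1) * b ^ n) / n) atTop :=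
        limsup_le_limsup (Eventually.of_forall (log_div_le_log_mul_pow_div hC hb hu))
          (isCoboundedUnder_le_of_le atTop fun n => by positivity) hg.isBoundedUnder_le
    _ = log b := hg.limsup_eq

lemma limsup_log_div_eq {u : ℕ → ℕ} {C b : ℝ} (hC : 1 ≤ C) (hb : 1 ≤ b)
    (hu : ∀ n, (u n : ℝ) ≤ C * (n + 1) * b ^ n) (hu' : ∀ n, 1 ≤ n → b ^ n ≤ u n) :
    limsup (fun n : ℕ => log (u n) / n) atTop = log b := by
  have hlow : ∀ᶠ n : ℕ in atTop, log b ≤ log (u n) / n := by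
    filter_upwards [eventually_ge_atTop 1] with n hn
    rw [le_div_iff₀ (by exact_mod_cast hn), mul_comm, ← log_pow]
    exact log_le_log (by positivity) (hu' n hn)
  exact (tendsto_of_tendsto_of_tendsto_of_le_of_le' tendsto_const_nhds
    (tendsto_log_mul_pow_div (by linarith) (by linarith)) hlow
    (Eventually.of_forall (log_div_le_log_mul_pow_div hC hb hu))).limsup_eq

lemma hC_eq_limsup {A : Type*} (X : Set (ℤ → A)) :
    hC X = limsup (fun n : ℕ => log (Nat.card (LC X n)) / n) atTop := by
  simp only [hC, max_eq_right (log_natCast_nonneg _)]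

end Entropy

inductive Letter : Type
  | zero | one | two | mark
deriving DecidableEq

namespace Letter

instance : Fintype Letter := ⟨{zero, one, two, mark}, by intro x; cases x <;> simp⟩

instance : TopologicalSpace Letter := ⊥

instance : DiscreteTopology Letter := ⟨rfl⟩

def collapse : Letter → Letter
  | zero => zero
  | one => one
  | two => one
  | mark => zero

@[simp] lemma collapse_ne_mark (a : Letter) : collapse a ≠ mark := by cases a <;> decide

@[simp] lemma collapse_ne_two (a : Letter) : collapse a ≠ two := by cases a <;> decide

lemma collapse_eq_one_iff {a : Letter} : collapse a = one ↔ a = one ∨ a = two := by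
  cases a <;> decide

lemma exists_ne_mark_collapse_ne (a : Letter) : ∃ c, c ≠ mark ∧ collapse c ≠ collapse a := by
  cases a
  exacts [⟨one, by decide⟩, ⟨zero, by decide⟩, ⟨zero, by decide⟩, ⟨one, by decide⟩]

def toFin3 : Letter → Fin 3
  | zero => 0
  | one => 1
  | two => 2
  | mark => 0

lemma toFin3_injOn : {a : Letter | a ≠ mark}.InjOn toFin3 := by
  intro a ha b hb
  cases a <;> cases b <;> simp_all [toFin3]

lemma card_letter : Fintype.card Letter = 4 := rfl

lemma card_ne_mark : Fintype.card {a : Letter // a ≠ mark} = 3 := by decide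

end Letter

open Letter

def AtMostOneMark (x : ℤ → Letter) : Prop :=
  ∀ i j, x i = mark → x j = mark → i = j

def echoShift : Set (ℤ → Letter) :=
  {x | AtMostOneMark x ∧ ∀ p k, x p = mark → 0 < k → x (p + k) = collapse (x (p - k))}

lemma mem_rev_echoShift {x : ℤ → Letter} :
    x ∈ rev echoShift ↔
      AtMostOneMark x ∧ ∀ p k, x p = mark → 0 < k → x (p - k) = collapse (x (p + k)) := by
  rw [mem_rev_iff]
  refine and_congr ⟨fun h i j hi hj => ?_, fun h i j hi hj => ?_⟩
    ⟨fun h p k hp hk => ?_, fun h p k hp hk => ?_⟩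
  · exact neg_inj.1 (h (-i) (-j) (by simpa using hi) (by simpa using hj))
  · exact neg_inj.1 (h (-i) (-j) hi hj)
  · simpa [sub_eq_add_neg, add_comm] using h (-p) k (by simpa using hp) hk
  · simpa [sub_eq_add_neg, add_comm] using h (-p) k hp hk

lemma isClosed_echoShift : IsClosed echoShift := by
  simp only [echoShift, AtMostOneMark, ofPred_and, ofPred_forall]
  refine (isClosed_iInter fun i => isClosed_iInter fun j => ?_).inter
    (isClosed_iInter fun p => isClosed_iInter fun k => ?_)
  · exact (isClosed_discrete {q : Letter × Letter | q.1 = mark → q.2 = mark → i = j}).preimage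
      (f := fun x : ℤ → Letter => (x i, x j)) (by fun_prop)
  · exact (isClosed_discrete
      {q : Letter × Letter × Letter | q.1 = mark → 0 < k → q.2.1 = collapse q.2.2}).preimage
      (f := fun x : ℤ → Letter => (x p, x (p + k), x (p - k))) (by fun_prop)

lemma shift_image_echoShift : shift '' echoShift = echoShift := by
  refine shift_image_eq_self fun c x ⟨hmark, hecho⟩ => ⟨fun i j hi hj => ?_, fun p k hp hk => ?_⟩
  · exact add_right_cancel (hmark _ _ hi hj)
  · simpa [add_right_comm, sub_add_eq_add_sub] using hecho (p + c) k hp hk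

lemma getElem_eq_mark_iff {X : Set (ℤ → Letter)} (hX : ∀ x ∈ X, AtMostOneMark x)
    {w : List Letter} {n : ℕ} (hw : w ∈ Lang X n) {i : ℕ} (hi : i < w.length) :
    w[i] = mark ↔ i = w.idxOf mark := by
  obtain ⟨-, x, hx, hxw⟩ := mem_Lang_iff.1 hw
  refine ⟨fun h => ?_, fun h => by subst h; exact List.getElem_idxOf hi⟩
  have hlt : w.idxOf mark < w.length := List.idxOf_lt_length_iff.2 (h ▸ List.getElem_mem hi)
  exact_mod_cast hX x hx i (w.idxOf mark) (by rw [hxw i hi, h])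
    (by rw [hxw _ hlt, List.getElem_idxOf hlt])

def echoSeq (l : ℤ → Letter) (p : ℤ) : ℤ → Letter := fun i =>
  if i < p then l i else if i = p then mark else collapse (l (2 * p - i))

section echoSeq

variable {l : ℤ → Letter} {p i : ℤ}

lemma echoSeq_of_lt (h : i < p) : echoSeq l p i = l i := if_pos h

lemma echoSeq_self : echoSeq l p p = mark := by simp [echoSeq]

lemma echoSeq_of_gt (h : p < i) : echoSeq l p i = collapse (l (2 * p - i)) := by
  simp [echoSeq, not_lt.2 h.le, h.ne']

lemma echoSeq_mem (hl : ∀ i < p, l i ≠ mark) : echoSeq l p ∈ echoShift := by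
  have hmark : ∀ i, echoSeq l p i = mark → i = p := by
    intro i hi
    rcases lt_trichotomy i p with h | rfl | h
    · exact absurd ((echoSeq_of_lt h).symm.trans hi) (hl i h)
    · rfl
    · exact absurd ((echoSeq_of_gt h).symm.trans hi) (collapse_ne_mark _)
  refine ⟨fun i j hi hj => (hmark i hi).trans (hmark j hj).symm, fun q k hq hk => ?_⟩
  obtain rfl := hmark q hq
  rw [echoSeq_of_gt (by omega), echoSeq_of_lt (by omega)]
  ring_nf

end echoSeq

lemma mem_fol_echoShift {v : List Letter} (hv : mark ∉ v) {c : Letter} (hc : c ≠ mark) :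
    (fun k : ℕ => echoSeq (pad v c) v.length (v.length - 1 + k)) ∈ fol echoShift v :=
  mem_fol_iff.2 ⟨_, echoSeq_mem fun i _ => pad_ne hv hc i,
    fun i hi => by rw [echoSeq_of_lt (by omega), pad_natCast hi], fun _ => rfl⟩

lemma isLeftConstraint_echoShift {w : List Letter} (hw : w ≠ []) (hmark : mark ∉ w) :
    IsLeftConstraint echoShift w := by
  have hn : 0 < w.length := List.length_pos_iff.2 hw
  obtain ⟨c, hc, hcw⟩ := exists_ne_mark_collapse_ne w[0]
  have hv : mark ∉ w.tail := fun h => hmark (List.mem_of_mem_tail h)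
  refine ⟨hw, nonempty_iff_ne_empty.1 ⟨_, mem_fol_echoShift hmark (c := zero) (by decide)⟩,
    (fol_subset_fol_tail shift_image_echoShift w).ssubset_of_not_subset fun hsub => ?_⟩
  obtain ⟨x, ⟨-, hxecho⟩, hxw, hxy⟩ := mem_fol_iff.1 (hsub (mem_fol_echoShift hv hc))
  set m := w.tail.length
  have hm : w.length = m + 1 := by simp [m]; omega
  -- `x` has the follower's marker at `|w|`, so `x (2 |w|)` is the collapse of both `c` and `w[0]`
  have hx1 := hxy 1
  have hx2 := hxy (m + 2)
  rw [hm] at hx1 hx2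
  rw [show (m : ℤ) - 1 + ((1 : ℕ) : ℤ) = m by push_cast; ring, echoSeq_self,
    show ((m + 1 : ℕ) : ℤ) - 1 + ((1 : ℕ) : ℤ) = m + 1 by push_cast; ring] at hx1
  rw [echoSeq_of_gt (by push_cast; omega),
    show 2 * (m : ℤ) - ((m : ℤ) - 1 + ((m + 2 : ℕ) : ℤ)) = -1 by push_cast; ring,
    pad_of_neg (by norm_num),
    show ((m + 1 : ℕ) : ℤ) - 1 + ((m + 2 : ℕ) : ℤ) = (m + 1) + (m + 1) by push_cast; ring] at hx2
  have hecho := hxecho (m + 1) (m + 1) hx1.symm (by positivity)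
  rw [← hx2, sub_self, ← Nat.cast_zero, hxw 0 hn] at hecho
  exact hcw hecho

lemma isExtendable_echoShift {w : List Letter} (hw : w ≠ []) (hmark : mark ∉ w) :
    IsExtendable echoShift w := by
  have hn : 0 < w.length := List.length_pos_iff.2 hw
  set b : ℕ → Letter := fun j => if h : j < w.length then w[w.length - 1 - j] else zero
  have hb : ∀ j, b j ≠ mark := by
    intro j
    simp only [b]
    split_ifs
    · exact fun h => hmark (h ▸ List.getElem_mem _)
    · decide
  refine ⟨isLeftConstraint_echoShift hw hmark, b, ?_,
    fun N => ⟨N, le_rfl, isLeftConstraint_echoShift (by simp [wordOf]) ?_⟩⟩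
  · refine List.ext_getElem (by simp [wordOf]; omega) fun i h1 h2 => ?_
    simp only [wordOf, List.getElem_map, List.getElem_range, b]
    rw [dif_pos (by omega)]
    congr 1
    omega
  · simpa [wordOf] using fun j _ => hb _

lemma card_Lang_echoShift_le (n : ℕ) : Nat.card (Lang echoShift n) ≤ (n + 1) * 3 ^ n := by
  have hX : ∀ x ∈ echoShift, AtMostOneMark x := fun x hx => hx.1
  let key : Lang echoShift n → Fin (n + 1) × List.Vector (Fin 3) n := fun ⟨w, hw⟩ =>
    (⟨w.idxOf mark, Nat.lt_succ_of_le (hw.1 ▸ List.idxOf_le_length)⟩,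
      ⟨w.map toFin3, by simp [hw.1]⟩)
  have hkey : Function.Injective key := by
    rintro ⟨w, hw⟩ ⟨w', hw'⟩ h
    have hidx : w.idxOf mark = w'.idxOf mark := congrArg (fun k => (k.1 : ℕ)) h
    have hmap : w.map toFin3 = w'.map toFin3 := congrArg (fun k => k.2.1) h
    refine Subtype.ext (List.ext_getElem (hw.1.trans hw'.1.symm) fun i hi hi' => ?_)
    have hm := (getElem_eq_mark_iff hX hw hi).trans
      (hidx ▸ (getElem_eq_mark_iff hX hw' hi').symm)
    by_cases h : w[i] = mark
    · rw [h, hm.1 h]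
    · exact toFin3_injOn h (mt hm.2 h) (by simpa [hi, hi'] using congrArg (·[i]?) hmap)
  calc Nat.card (Lang echoShift n)
      ≤ Nat.card (Fin (n + 1) × List.Vector (Fin 3) n) := Nat.card_le_card_of_injective key hkey
    _ = (n + 1) * 3 ^ n := by simp [Nat.card_eq_fintype_card, card_vector]

lemma card_ELC_echoShift_ge {n : ℕ} (hn : 1 ≤ n) : 3 ^ n ≤ Nat.card (ELC echoShift n) := by
  have : Finite (ELC echoShift n) :=
    ((finite_Lang _ n).subset ((ELC_subset_LC _ n).trans (LC_subset_Lang _ n))).to_subtype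
  let f : List.Vector {a : Letter // a ≠ mark} n → ELC echoShift n := fun v =>
    ⟨v.1.map Subtype.val, by simp,
      isExtendable_echoShift (by simpa [← List.length_pos_iff] using by omega) (by simp)⟩
  have hf : Function.Injective f := fun v v' h =>
    Subtype.ext ((List.map_injective_iff.2 Subtype.val_injective) (congrArg Subtype.val h))
  calc 3 ^ n = Nat.card (List.Vector {a : Letter // a ≠ mark} n) := by
        rw [Nat.card_eq_fintype_card, card_vector, card_ne_mark]
    _ ≤ Nat.card (ELC echoShift n) := Nat.card_le_card_of_injective f hf

lemma atMostOneMark_of_mem_rev : ∀ x ∈ rev echoShift, AtMostOneMark x :=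
  fun _ hx => (mem_rev_echoShift.1 hx).1

section Reversal

variable {w : List Letter} {n : ℕ}

lemma getElem_ne_two_of_lt_mark (hw : w ∈ Lang (rev echoShift) n) {a j : ℕ} (ha : a < w.length)
    (hwa : w[a] = mark) (hj : j < a) : w[j] ≠ two := by
  obtain ⟨-, x, hx, hxw⟩ := mem_Lang_iff.1 hw
  have h := (mem_rev_echoShift.1 hx).2 a (a - j) (by rw [hxw a ha, hwa]) (by omega)
  rw [sub_sub_cancel, hxw j (by omega)] at h
  exact h ▸ collapse_ne_two _

lemma getElem_reflect (hw : w ∈ Lang (rev echoShift) n) {a b : ℕ} (hab : a < b)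
    (hb : b < w.length) (hwa : w[a] = mark) (hba : b ≤ 2 * a) :
    w[2 * a - b] = collapse w[b] := by
  obtain ⟨-, x, hx, hxw⟩ := mem_Lang_iff.1 hw
  have h := (mem_rev_echoShift.1 hx).2 a (b - a) (by rw [hxw a (by omega), hwa]) (by omega)
  rwa [show (a : ℤ) - (b - a) = ((2 * a - b : ℕ) : ℤ) by omega, add_sub_cancel,
    hxw _ (by omega), hxw _ hb] at h

lemma markFree_of_mem_fol_rev_of_two {j : ℕ} (hj : j < w.length) (hwj : w[j] = two)
    {y : ℕ → Letter} (hy : y ∈ fol (rev echoShift) w) (d : ℕ) : y d ≠ mark := by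
  obtain ⟨x, hx, hxw, hxy⟩ := mem_fol_iff.1 hy
  intro hd
  have hp : x (w.length - 1 + d) = mark := (hxy d).symm.trans hd
  have hxj : x j = two := by rw [hxw j hj, hwj]
  -- a marker after the `2` would reflect it to a collapsed letter
  rcases (show (j : ℤ) ≤ w.length - 1 + d by omega).eq_or_lt with h | h
  · exact absurd (hxj.symm.trans (h ▸ hp)) (by decide)
  · have h' := (mem_rev_echoShift.1 hx).2 _ (w.length - 1 + d - j) hp (by omega)
    rw [sub_sub_cancel, hxj] at h'
    exact collapse_ne_two _ h'.symm

lemma markFree_of_mem_fol_rev_of_mark {a : ℕ} (ha : a + 1 < w.length) (hwa : w[a] = mark)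
    {y : ℕ → Letter} (hy : y ∈ fol (rev echoShift) w) (d : ℕ) : y d ≠ mark := by
  obtain ⟨x, hx, hxw, hxy⟩ := mem_fol_iff.1 hy
  intro hd
  have := atMostOneMark_of_mem_rev x hx _ _ ((hxy d).symm.trans hd)
    (by rw [hxw a (by omega), hwa] : x a = mark)
  omega

lemma mem_fol_rev_of_markFree (hw : w ≠ []) (hmark : mark ∉ w) {y : ℕ → Letter}
    (hy0 : y 0 = w.getLast hw) (hy : ∀ d, y d ≠ mark) : y ∈ fol (rev echoShift) w := by
  have hx := splice_ne hmark (by decide) hy (c := zero)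
  exact mem_fol_iff.2 ⟨splice w zero y,
    mem_rev_echoShift.2 ⟨fun i _ hi => absurd hi (hx i), fun p _ hp => absurd hp (hx p)⟩,
    fun _ hi => splice_natCast hi, fun k => (splice_read hw hy0 k).symm⟩

lemma mem_fol_rev_of_mark (hw : w ∈ Lang (rev echoShift) n) {a : ℕ}
    (h2a : 2 * a + 1 < w.length) (hwa : w[a] = mark) {y : ℕ → Letter}
    (hy0 : y 0 = w.getLast (List.ne_nil_of_length_pos (by omega))) (hy : ∀ d, y d ≠ mark) :
    y ∈ fol (rev echoShift) w := by
  -- reflect the splice to the left of `0`; the reflection of `w` itself lies inside `w`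
  set x : ℤ → Letter := fun i =>
    if i < 0 then collapse (splice w zero y (2 * a - i)) else splice w zero y i
  have hxR : ∀ i, 0 ≤ i → x i = splice w zero y i := fun i hi => if_neg (not_lt.2 hi)
  have hmark : ∀ i, x i = mark → i = a := by
    intro i hi
    by_cases h : i < 0
    · simp [x, h] at hi
    rw [hxR i (not_lt.1 h)] at hi
    rcases splice_cases w zero y i with ⟨j, hj, rfl, h'⟩ | h' | ⟨d, h'⟩ <;> rw [h'] at hi
    · have := ((getElem_eq_mark_iff atMostOneMark_of_mem_rev hw hj).1 hi).trans
        ((getElem_eq_mark_iff atMostOneMark_of_mem_rev hw (by omega)).1 hwa).symm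
      exact_mod_cast this
    · exact absurd hi (by decide)
    · exact absurd hi (hy d)
  refine mem_fol_iff.2 ⟨x, mem_rev_echoShift.2 ⟨fun i j hi hj =>
    (hmark i hi).trans (hmark j hj).symm, fun p k hp hk => ?_⟩,
    fun i hi => (hxR i (by positivity)).trans (splice_natCast hi), fun k => ?_⟩
  · obtain rfl := hmark p hp
    rw [hxR (a + k) (by omega)]
    by_cases h : (a : ℤ) - k < 0
    · simp only [x, if_pos h]
      congr 2
      ring
    · rw [hxR _ (not_lt.1 h)]
      lift k to ℕ using hk.le
      rw [show (a : ℤ) - k = ((2 * a - (a + k) : ℕ) : ℤ) by omega,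
        show (a : ℤ) + k = ((a + k : ℕ) : ℤ) by push_cast; ring,
        splice_natCast (by omega), splice_natCast (by omega)]
      exact getElem_reflect hw (by omega) (by omega) hwa (by omega)
  · rw [hxR _ (by omega)]
    exact (splice_read _ hy0 k).symm

lemma fol_tail_subset_fol_rev (hw : 2 ≤ w.length)
    (htail : ∀ y ∈ fol (rev echoShift) w.tail, ∀ d, y d ≠ mark)
    (hfree : ∀ y : ℕ → Letter, y 0 = w.getLast (List.ne_nil_of_length_pos (by omega)) →
      (∀ d, y d ≠ mark) → y ∈ fol (rev echoShift) w) :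
    fol (rev echoShift) w.tail ⊆ fol (rev echoShift) w := by
  have hw' : w.tail ≠ [] := List.ne_nil_of_length_pos (by simp; omega)
  exact fun y hy => hfree y ((fol_apply_zero hy hw').trans (List.getLast_tail hw')) (htail y hy)

lemma not_isLeftConstraint_rev_of_two (hmark : mark ∉ w) {j : ℕ} (hj0 : 0 < j)
    (hj : j < w.length) (hwj : w[j] = two) : ¬ IsLeftConstraint (rev echoShift) w := by
  refine not_isLeftConstraint_of_fol_tail_subset (fol_tail_subset_fol_rev (by omega)
    (fun y hy => markFree_of_mem_fol_rev_of_two (j := j - 1) (by simp; omega) ?_ hy)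
    fun y => mem_fol_rev_of_markFree _ hmark)
  simp only [List.getElem_tail, Nat.sub_add_cancel hj0, hwj]

lemma not_isLeftConstraint_rev_of_mark {a : ℕ} (ha0 : 0 < a) (h2a : 2 * a + 1 < w.length)
    (hwa : w[a] = mark) : ¬ IsLeftConstraint (rev echoShift) w := by
  refine fun hw => not_isLeftConstraint_of_fol_tail_subset (fol_tail_subset_fol_rev (by omega)
    (fun y hy => markFree_of_mem_fol_rev_of_mark (a := a - 1) (by simp; omega) ?_ hy)
    fun y => mem_fol_rev_of_mark hw.mem_Lang h2a hwa) hw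
  simp only [List.getElem_tail, Nat.sub_add_cancel ha0, hwa]

lemma not_isLeftConstraint_rev_of_mark_zero_of_two {j : ℕ} (hj0 : 0 < j) (hj : j < w.length)
    (hw0 : w[0] = mark) (hwj : w[j] = two) :
    ¬ IsLeftConstraint (rev echoShift) w := by
  refine fun hw => not_isLeftConstraint_of_fol_tail_subset (fol_tail_subset_fol_rev (by omega)
    (fun y hy => markFree_of_mem_fol_rev_of_two (j := j - 1) (by simp; omega) ?_ hy)
    fun y => mem_fol_rev_of_mark hw.mem_Lang (a := 0) (by omega) hw0) hw
  simp only [List.getElem_tail, Nat.sub_add_cancel hj0, hwj]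

lemma IsLeftConstraint.getElem_eq_two_iff (hw : IsLeftConstraint (rev echoShift) w) {i : ℕ}
    (hi0 : 0 < i) (hi : i < w.length) (hm : w[i] ≠ mark) (ho : w[i] ≠ one) :
    w[i] = two ↔
      w.idxOf mark < i ∧ i ≤ 2 * w.idxOf mark ∧ w[2 * w.idxOf mark - i]? = some one := by
  have hL := hw.mem_Lang
  constructor
  · intro h2
    have hmem : mark ∈ w := by_contra fun h => not_isLeftConstraint_rev_of_two h hi0 hi h2 hw
    set a := w.idxOf mark
    have ha : a < w.length := List.idxOf_lt_length_iff.2 hmem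
    have hwa : w[a] = mark := List.getElem_idxOf ha
    have hai : a < i := by
      rcases lt_trichotomy a i with h | rfl | h
      · exact h
      · exact absurd hwa hm
      · exact absurd h2 (getElem_ne_two_of_lt_mark hL ha hwa h)
    have ha0 : 0 < a := Nat.pos_of_ne_zero fun h0 =>
      not_isLeftConstraint_rev_of_mark_zero_of_two hi0 hi
        ((getElem_eq_mark_iff atMostOneMark_of_mem_rev hL _).2 h0.symm) h2 hw
    have hbig : w.length ≤ 2 * a + 1 :=
      not_lt.1 fun h => not_isLeftConstraint_rev_of_mark ha0 h hwa hw
    refine ⟨hai, by omega, ?_⟩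
    rw [List.getElem?_eq_getElem (by omega), getElem_reflect hL hai hi hwa (by omega), h2]
    rfl
  · rintro ⟨hai, hia, h1⟩
    obtain ⟨_, h1⟩ := List.getElem?_eq_some_iff.1 h1
    rw [getElem_reflect hL hai hi (List.getElem_idxOf (by omega)) hia] at h1
    exact (collapse_eq_one_iff.1 h1).resolve_left ho

lemma IsLeftConstraint.eq_of_rev {w' : List Letter} (hw : IsLeftConstraint (rev echoShift) w)
    (hw' : IsLeftConstraint (rev echoShift) w') (hlen : w.length = w'.length)
    (h0 : w[0]? = w'[0]?) (hidx : w.idxOf mark = w'.idxOf mark)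
    (hone : ∀ j : ℕ, w[j]? = some one ↔ w'[j]? = some one) : w = w' := by
  refine List.ext_getElem hlen fun i hi hi' => ?_
  rcases i.eq_zero_or_pos with rfl | hi0
  · simpa [List.getElem?_eq_getElem hi, List.getElem?_eq_getElem hi'] using h0
  have hm : w[i] = mark ↔ w'[i] = mark := by
    rw [getElem_eq_mark_iff atMostOneMark_of_mem_rev hw.mem_Lang,
      getElem_eq_mark_iff atMostOneMark_of_mem_rev hw'.mem_Lang, hidx]
  have ho : w[i] = one ↔ w'[i] = one := by
    simpa [List.getElem?_eq_getElem hi, List.getElem?_eq_getElem hi'] using hone i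
  have ht : w[i] = two ↔ w'[i] = two := by
    by_cases h : w[i] = mark ∨ w[i] = one
    · have h' : w'[i] = mark ∨ w'[i] = one := by rwa [← hm, ← ho]
      rcases h with h | h <;> rcases h' with h' | h' <;> simp [h, h']
    · have h' : ¬ (w'[i] = mark ∨ w'[i] = one) := by rwa [← hm, ← ho]
      push Not at h h'
      rw [hw.getElem_eq_two_iff hi0 hi h.1 h.2, hw'.getElem_eq_two_iff hi0 hi' h'.1 h'.2, hidx,
        hone]
  revert hm ho ht
  generalize w[i] = b
  generalize w'[i] = b'
  cases b <;> cases b' <;> decide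

lemma card_LC_rev_echoShift_le (n : ℕ) :
    Nat.card (LC (rev echoShift) n) ≤ 5 * (n + 1) * 2 ^ n := by
  let key : LC (rev echoShift) n → Option Letter × Fin (n + 1) × List.Vector Bool n :=
    fun ⟨w, hw⟩ => (w[0]?, ⟨w.idxOf mark, Nat.lt_succ_of_le (hw.1 ▸ List.idxOf_le_length)⟩,
      ⟨w.map (fun a => decide (a = one)), by simp [hw.1]⟩)
  have hkey : Function.Injective key := by
    rintro ⟨w, hlen, hw⟩ ⟨w', hlen', hw'⟩ h
    have hone : ∀ j : ℕ, w[j]? = some one ↔ w'[j]? = some one := by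
      intro j
      have := congrArg (fun k => k.2.2.1[j]?) h
      simp only [key, List.getElem?_map] at this
      cases hj : w[j]? <;> cases hj' : w'[j]? <;> simp_all
    exact Subtype.ext (hw.eq_of_rev hw' (hlen.trans hlen'.symm) (congrArg Prod.fst h)
      (congrArg (fun k => (k.2.1 : ℕ)) h) hone)
  calc Nat.card (LC (rev echoShift) n)
      ≤ Nat.card (Option Letter × Fin (n + 1) × List.Vector Bool n) :=
        Nat.card_le_card_of_injective key hkey
    _ = 5 * (n + 1) * 2 ^ n := by
        simp [Nat.card_eq_fintype_card, card_vector, card_letter]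
        ring

end Reversal

section EntropyValues

open Real

lemma hTop_echoShift : hTop echoShift = log 3 :=
  limsup_log_div_eq (C := 1) (b := 3) le_rfl (by norm_num)
    (fun n => by rw [one_mul]; exact_mod_cast card_Lang_echoShift_le n)
    (fun n hn => by
      exact_mod_cast (card_ELC_echoShift_ge hn).trans
        ((card_ELC_le_card_LC _ n).trans (card_LC_le_card_Lang _ n)))

lemma hC_echoShift : hC echoShift = log 3 := by
  rw [hC_eq_limsup]
  exact limsup_log_div_eq (C := 1) (b := 3) le_rfl (by norm_num)
    (fun n => by
      rw [one_mul]
      exact_mod_cast (card_LC_le_card_Lang _ n).trans (card_Lang_echoShift_le n))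
    (fun n hn => by exact_mod_cast (card_ELC_echoShift_ge hn).trans (card_ELC_le_card_LC _ n))

lemma hCstar_echoShift : hCstar echoShift = log 3 :=
  limsup_log_div_eq (C := 1) (b := 3) le_rfl (by norm_num)
    (fun n => by
      rw [one_mul]
      exact_mod_cast ((card_ELC_le_card_LC _ n).trans (card_LC_le_card_Lang _ n)).trans
        (card_Lang_echoShift_le n))
    (fun n hn => by exact_mod_cast card_ELC_echoShift_ge hn)

lemma hC_rev_echoShift_le : hC (rev echoShift) ≤ log 2 := by
  rw [hC_eq_limsup]
  exact limsup_log_div_le (C := 5) (b := 2) (by norm_num) (by norm_num)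
    (fun n => by exact_mod_cast card_LC_rev_echoShift_le n)

lemma hCstar_rev_echoShift_le : hCstar (rev echoShift) ≤ log 2 :=
  limsup_log_div_le (C := 5) (b := 2) (by norm_num) (by norm_num)
    (fun n => by exact_mod_cast (card_ELC_le_card_LC _ n).trans (card_LC_rev_echoShift_le n))

end EntropyValues

/-- There is a subshift `X` with
`h_𝒞(X̄) < h_𝒞(X) = h_top(X)` and `h*_𝒞(X̄) < h*_𝒞(X) = h_top(X)`;
in particular the (extendable) left constraint entropies of a subshift and its
time reversal can differ, and a QFT can satisfy `h_𝒞(X) = h_top(X)`. -/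
theorem reversal_asymmetry :
    ∃ (A : Type) (_ : Fintype A) (X : Set (ℤ → A)),
      (letI : TopologicalSpace A := ⊥
       IsSubshift X ∧ IsQFT X) ∧
      hC (rev X) < hC X ∧ hC X = hTop X ∧
      hCstar (rev X) < hCstar X ∧ hCstar X = hTop X := by
  have hlog : Real.log 2 < Real.log 3 := Real.log_lt_log (by norm_num) (by norm_num)
  have hsub : IsSubshift echoShift := ⟨isClosed_echoShift, shift_image_echoShift⟩
  have hC_lt : hC (rev echoShift) < hC echoShift :=
    hC_echoShift ▸ hC_rev_echoShift_le.trans_lt hlog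
  refine ⟨Letter, inferInstance, echoShift, ⟨hsub, hsub, ?_⟩, hC_lt, ?_, ?_, ?_⟩
  · exact (min_le_right _ _).trans_lt (hTop_echoShift ▸ hC_echoShift ▸ hC_lt)
  · rw [hC_echoShift, hTop_echoShift]
  · exact hCstar_echoShift ▸ hCstar_rev_echoShift_le.trans_lt hlog
  · rw [hCstar_echoShift, hTop_echoShift]

end QFTPaper
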